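/- arXiv:1804.06258 — 4 statements merged into one kernel-verified Lean document; each statement's English description precedes it below -/
import Mathlib

section
/- Let A > 0 and let (x_l)_{l≥0} be a sequence of strictly positive real numbers that is summable with sum S = Σ_{l≥0} x_l satisfying 0 < S ≤ A. Then Σ_{l≥0} exp(−A/x_l) ≤ exp(−A/S). -/
/-- Let `A > 0` and `(x l)` a summable sequence of strictly positive reals with sum
`S = ∑' l, x l` satisfying `0 < S ≤ A`. Then `∑' l, exp (-A / x l) ≤ exp (-A / S)`. -/
theorem tsum_exp_neg_div_le (A : ℝ) (hA : 0 < A) (x : ℕ → ℝ)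
    (hx : ∀ l, 0 < x l) (hsum : Summable x) (S : ℝ) (hS : S = ∑' l, x l)
    (hS0 : 0 < S) (hSA : S ≤ A) :
    (∑' l, Real.exp (-A / x l)) ≤ Real.exp (-A / S) := by
  have hxle : ∀ l, x l ≤ S := by
    intro l
    rw [hS]
    exact Summable.le_tsum hsum l (fun m _ => (hx m).le)
  have key : ∀ l, Real.exp (-A / x l) ≤ x l * (Real.exp (-A / S) / S) := by
    intro l
    have hxl := hx l
    have h3 : S / x l - 1 ≤ A / x l - A / S := by
      have h3' : S * (S - x l) ≤ A * (S - x l) :=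
        mul_le_mul_of_nonneg_right hSA (by linarith [hxle l])
      rw [div_sub_one hxl.ne', div_sub_div _ _ hxl.ne' hS0.ne',
        div_le_div_iff₀ hxl (by positivity)]
      nlinarith
    have h1 : S / x l ≤ Real.exp (A / x l - A / S) := by
      have h2 := Real.add_one_le_exp (S / x l - 1)
      have h4 := Real.exp_le_exp.mpr h3
      linarith
    have h1' : S ≤ x l * Real.exp (A / x l - A / S) := by
      rw [div_le_iff₀ hxl] at h1
      rw [mul_comm]; exact h1
    have hmain : Real.exp (-A / x l) * S ≤ x l * Real.exp (-A / S) := by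
      calc Real.exp (-A / x l) * S
          ≤ Real.exp (-A / x l) * (x l * Real.exp (A / x l - A / S)) :=
            mul_le_mul_of_nonneg_left h1' (Real.exp_pos _).le
        _ = x l * Real.exp (-A / x l + (A / x l - A / S)) := by
            rw [Real.exp_add]; ring
        _ = x l * Real.exp (-A / S) := by congr 1; ring
    have : x l * (Real.exp (-A / S) / S) = x l * Real.exp (-A / S) / S := by ring
    rw [this, le_div_iff₀ hS0]
    exact hmain
  have hsum2 : Summable (fun l => x l * (Real.exp (-A / S) / S)) :=
    hsum.mul_right _
  have hsum1 : Summable (fun l => Real.exp (-A / x l)) :=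
    Summable.of_nonneg_of_le (fun l => (Real.exp_pos _).le) key hsum2
  calc (∑' l, Real.exp (-A / x l))
      ≤ ∑' l, x l * (Real.exp (-A / S) / S) := Summable.tsum_le_tsum key hsum1 hsum2
    _ = S * (Real.exp (-A / S) / S) := by rw [tsum_mul_right, ← hS]
    _ = Real.exp (-A / S) := by field_simp
end

section
/- Let (Ω, F, P) be a probability space with a filtration (F_i)_{0≤i≤k}, and let (M_i)_{0≤i≤k} be a real-valued martingale with respect to this filtration such that M_0 = 0 almost surely and, for each i, the random variable M_i is Gaussian distributed with mean zero. If Var[M_k] > 0, then for every η > 0, P( max_{0≤i≤k} |M_i| > η ) ≤ 2·exp( −η² / (2·Var[M_k]) ). -/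
/-! By conditional Jensen, `i ↦ exp (c * M (min i k))` is a nonnegative submartingale, so Doob's
maximal inequality bounds `P (∃ i ≤ k, a ≤ c * M i)` by
`exp (-a) * E[exp (c * M k)] = exp (-a + c ^ 2 Var[M k] / 2)`. With `c = ± η / Var[M k]` each tail
is at most `exp (-η ^ 2 / (2 Var[M k]))`. -/

open MeasureTheory ProbabilityTheory
open Real Finset
open scoped ENNReal NNReal

section

variable {Ω : Type*} {m0 : MeasurableSpace Ω} {P : Measure Ω}

namespace MeasureTheory.Martingale

theorem comp_min_const {ι E : Type*} [LinearOrder ι] [NormedAddCommGroup E] [NormedSpace ℝ E]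
    [CompleteSpace E] {ℱ : Filtration ι m0} [SigmaFiniteFiltration P ℱ] {M : ι → Ω → E}
    (hM : Martingale M ℱ P) (k : ι) : Martingale (fun i ↦ M (min i k)) ℱ P := by
  refine ⟨fun i ↦ (hM.stronglyAdapted _).mono (ℱ.mono (min_le_left i k)), fun i j hij ↦ ?_⟩
  show P[M (min j k)|ℱ i] =ᵐ[P] M (min i k)
  rcases le_total i k with hik | hki
  · rw [min_eq_left hik]
    exact hM.condExp_ae_eq (le_min hij hik)
  · rw [min_eq_right hki, min_eq_right (hki.trans hij)]
    exact (condExp_of_stronglyMeasurable (ℱ.le i)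
      ((hM.stronglyAdapted k).mono (ℱ.mono hki)) (hM.integrable k)).eventuallyEq

theorem submartingale_convex_comp {ι E : Type*} [Preorder ι] [NormedAddCommGroup E]
    [NormedSpace ℝ E] [CompleteSpace E] {ℱ : Filtration ι m0} [SigmaFiniteFiltration P ℱ]
    {M : ι → Ω → E} (hM : Martingale M ℱ P) {φ : E → ℝ} (hφ : ConvexOn ℝ Set.univ φ)
    (hφc : Continuous φ) (hint : ∀ i, Integrable (fun ω ↦ φ (M i ω)) P) :
    Submartingale (fun i ω ↦ φ (M i ω)) ℱ P := by
  refine ⟨fun i ↦ hφc.comp_stronglyMeasurable (hM.stronglyAdapted i), fun i j hij ↦ ?_, hint⟩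
  filter_upwards [hM.condExp_ae_eq hij, hφ.map_condExp_le_univ (ℱ.le i)
    hφc.lowerSemicontinuous (hM.integrable j) (hint j)] with ω hω hJensen
  rw [← hω]
  exact hJensen

theorem measure_exists_le_mul_le_exp_mgf [IsFiniteMeasure P] {ℱ : Filtration ℕ m0}
    {M : ℕ → Ω → ℝ} (hM : Martingale M ℱ P) {k : ℕ} {c : ℝ}
    (hint : ∀ i ≤ k, Integrable (fun ω ↦ exp (c * M i ω)) P) (a : ℝ) :
    P {ω | ∃ i ≤ k, a ≤ c * M i ω} ≤ ENNReal.ofReal (exp (-a) * mgf (M k) P c) := by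
  set ε : ℝ≥0 := (exp a).toNNReal
  have hsub : Submartingale (fun i ω ↦ exp (c * M (min i k) ω)) ℱ P :=
    ((hM.comp_min_const k).smul c).submartingale_convex_comp convexOn_exp continuous_exp
      fun i ↦ hint _ (min_le_right i k)
  set S := {ω | (ε : ℝ) ≤ (range (k + 1)).sup' nonempty_range_add_one
    fun i ↦ exp (c * M (min i k) ω)}
  have hsubset : {ω | ∃ i ≤ k, a ≤ c * M i ω} ⊆ S := by
    rintro ω ⟨i, hik, hi⟩
    refine le_trans ?_ (le_sup' (fun i ↦ exp (c * M (min i k) ω))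
      (mem_range.2 (Nat.lt_succ_of_le hik)))
    rw [min_eq_left hik, Real.coe_toNNReal _ (exp_pos a).le]
    exact exp_le_exp.2 hi
  have hdoob : ε * P S ≤ ENNReal.ofReal (mgf (M k) P c) := by
    refine (maximal_ineq hsub (fun i ω ↦ (exp_pos _).le) k).trans (ENNReal.ofReal_le_ofReal ?_)
    simp only [min_self]
    exact setIntegral_le_integral (hint k le_rfl) (.of_forall fun ω ↦ (exp_pos _).le)
  calc P {ω | ∃ i ≤ k, a ≤ c * M i ω} ≤ P S := measure_mono hsubset
    _ = ENNReal.ofReal (exp (-a)) * (ε * P S) := by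
      rw [← mul_assoc, show (ε : ℝ≥0∞) = ENNReal.ofReal (exp a) from rfl,
        ← ENNReal.ofReal_mul (exp_pos _).le, ← exp_add, neg_add_cancel, exp_zero,
        ENNReal.ofReal_one, one_mul]
    _ ≤ ENNReal.ofReal (exp (-a)) * ENNReal.ofReal (mgf (M k) P c) := by gcongr
    _ = ENNReal.ofReal (exp (-a) * mgf (M k) P c) := (ENNReal.ofReal_mul (exp_pos _).le).symm

end MeasureTheory.Martingale

lemma integrable_exp_mul_of_map_eq_gaussianReal {X : Ω → ℝ} {μ : ℝ} {v : ℝ≥0}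
    (hX : P.map X = gaussianReal μ v) (t : ℝ) : Integrable (fun ω ↦ exp (t * X ω)) P := by
  have : NeZero P := ⟨by rintro rfl; exact NeZero.ne _ (by simpa using hX.symm)⟩
  exact mgf_pos_iff.1 (by rw [mgf_gaussianReal hX]; positivity)

end

theorem gaussian_martingale_maximal_general
    {Ω : Type*} {m0 : MeasurableSpace Ω} {P : Measure Ω} [IsProbabilityMeasure P]
    (ℱ : Filtration ℕ m0) (M : ℕ → Ω → ℝ) (k : ℕ)
    (hmart : Martingale M ℱ P)
    (hgauss : ∀ i ≤ k, ∃ v : NNReal, P.map (M i) = gaussianReal 0 v)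
    (hvar : 0 < variance (M k) P)
    (η : ℝ) (hη : 0 < η) :
    P {ω | ∃ i ≤ k, η < |M i ω|} ≤
      ENNReal.ofReal (2 * Real.exp (-η ^ 2 / (2 * variance (M k) P))) := by
  obtain ⟨v, hv⟩ := hgauss k le_rfl
  rw [← variance_id_map (aemeasurable_of_map_neZero (by rw [hv]; infer_instance)), hv,
    variance_id_gaussianReal] at hvar ⊢
  set t := η / v
  have htail (c : ℝ) (hc : c ^ 2 = t ^ 2) :
      P {ω | ∃ i ≤ k, t * η ≤ c * M i ω} ≤ ENNReal.ofReal (exp (-η ^ 2 / (2 * v))) := by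
    refine (hmart.measure_exists_le_mul_le_exp_mgf (fun i hi ↦ ?_) _).trans_eq ?_
    · obtain ⟨w, hw⟩ := hgauss i hi
      exact integrable_exp_mul_of_map_eq_gaussianReal hw c
    rw [mgf_gaussianReal hv, ← exp_add, hc]
    congr 2
    simp only [t]
    field_simp
    ring
  have hsubset : {ω | ∃ i ≤ k, η < |M i ω|} ⊆
      {ω | ∃ i ≤ k, t * η ≤ t * M i ω} ∪ {ω | ∃ i ≤ k, t * η ≤ -t * M i ω} := by
    rintro ω ⟨i, hik, hi⟩
    have ht : 0 < t := by positivity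
    rcases lt_abs.1 hi with h | h
    · exact Or.inl ⟨i, hik, by nlinarith⟩
    · exact Or.inr ⟨i, hik, by nlinarith⟩
  calc _ ≤ _ := measure_mono hsubset
    _ ≤ _ := measure_union_le _ _
    _ ≤ _ := add_le_add (htail t rfl) (htail (-t) (neg_sq t))
    _ = _ := by rw [← ENNReal.ofReal_add (by positivity) (by positivity), ← two_mul]

/-- Gaussian-martingale maximal inequality: if `(M i)_{0 ≤ i ≤ k}` is a real martingale with
`M 0 = 0` a.s. whose marginals are centered Gaussian, and `Var[M k] > 0`, then for every
`η > 0`, `P(max_{0 ≤ i ≤ k} |M i| > η) ≤ 2 exp (-η² / (2 Var[M k]))`. -/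
theorem gaussian_martingale_maximal
    {Ω : Type*} {m0 : MeasurableSpace Ω} {P : Measure Ω} [IsProbabilityMeasure P]
    (ℱ : Filtration ℕ m0) (M : ℕ → Ω → ℝ) (k : ℕ)
    (hmart : Martingale M ℱ P)
    (h0 : M 0 =ᵐ[P] 0)
    (hgauss : ∀ i ≤ k, ∃ v : NNReal, P.map (M i) = gaussianReal 0 v)
    (hvar : 0 < variance (M k) P)
    (η : ℝ) (hη : 0 < η) :
    P {ω | ∃ i ≤ k, η < |M i ω|} ≤
      ENNReal.ofReal (2 * Real.exp (-η ^ 2 / (2 * variance (M k) P))) :=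
  gaussian_martingale_maximal_general ℱ M k hmart hgauss hvar η hη
end

section
/- Let β ∈ ℂ and let T(M,N,β) = Σ_{m=1}^{M} Σ_{n=1}^{N} v_{mn}^H v_{mn}, where v_{mn} = ( 1, j, j·2π·((m−1)/M)·β, j·2π·((n−1)/N)·β ) ∈ ℂ⁴. Then, entrywise, (1/(M·N))·T(M,N,β) converges, as M → ∞ and N → ∞ (jointly along the product of atTop filters on the positive integers), to the 4×4 matrix T_L(β) with rows: row 1 = ( 1, j, j·π·β, j·π·β ); row 2 = ( −j, 1, π·β, π·β ); row 3 = ( −j·π·conj(β), π·conj(β), (4/3)·π²·|β|², π²·|β|² ); row 4 = ( −j·π·conj(β), π·conj(β), π²·|β|², (4/3)·π²·|β|² ). -/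
/-! Each coordinate of `v_{mn}` is a constant times a monomial `(m/M)^e (n/N)^f` with
`e, f ≤ 1`, so each entry of `T/(MN)` is a constant times a product of two Riemann sums
`(1/M) ∑_{m<M} (m/M)^k` of `∫₀¹ x^k dx = 1/(k+1)`. Comparing such a sum with the integral of the
monotone function `x^k` pins it between `1/(k+1) - 1/M` and `1/(k+1)`. -/

open Finset Filter Complex

/-- The row vector `v_{mn} = (1, j, j·2π·((m-1)/M)·β, j·2π·((n-1)/N)·β) ∈ ℂ⁴`, where the
argument `m` corresponds to `m-1` in the paper (i.e. `m` ranges over `0, …, M-1`). -/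
noncomputable def vrow (M N : ℕ) (β : ℂ) (m n : ℕ) : Fin 4 → ℂ :=
  ![1, Complex.I,
    Complex.I * (2 * (Real.pi : ℂ)) * ((m : ℂ) / (M : ℂ)) * β,
    Complex.I * (2 * (Real.pi : ℂ)) * ((n : ℂ) / (N : ℂ)) * β]

/-- The asymptotic limit `T_L(β)` of the normalized CRLB weighting matrix. -/
noncomputable def TL (β : ℂ) : Matrix (Fin 4) (Fin 4) ℂ :=
  !![1, Complex.I, Complex.I * (Real.pi : ℂ) * β, Complex.I * (Real.pi : ℂ) * β;
     -Complex.I, 1, (Real.pi : ℂ) * β, (Real.pi : ℂ) * β;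
     -Complex.I * (Real.pi : ℂ) * (starRingEnd ℂ) β, (Real.pi : ℂ) * (starRingEnd ℂ) β,
       (4 / 3) * (Real.pi : ℂ) ^ 2 * (Complex.normSq β : ℂ),
       (Real.pi : ℂ) ^ 2 * (Complex.normSq β : ℂ);
     -Complex.I * (Real.pi : ℂ) * (starRingEnd ℂ) β, (Real.pi : ℂ) * (starRingEnd ℂ) β,
       (Real.pi : ℂ) ^ 2 * (Complex.normSq β : ℂ),
       (4 / 3) * (Real.pi : ℂ) ^ 2 * (Complex.normSq β : ℂ)]

open Topology ComplexConjugate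

theorem sum_range_pow_le_pow_succ_div (k M : ℕ) :
    ∑ i ∈ range M, (i : ℝ) ^ k ≤ (M : ℝ) ^ (k + 1) / (k + 1) := by
  have hmono : MonotoneOn (fun x : ℝ => x ^ k) (Set.Icc 0 (0 + M)) :=
    pow_left_monotoneOn.mono fun _ hx => hx.1
  simpa [integral_pow] using hmono.sum_le_integral

theorem pow_succ_div_sub_pow_le_sum_range_pow (k M : ℕ) :
    (M : ℝ) ^ (k + 1) / (k + 1) - (M : ℝ) ^ k ≤ ∑ i ∈ range M, (i : ℝ) ^ k := by
  have hmono : MonotoneOn (fun x : ℝ => x ^ k) (Set.Icc 0 (0 + M)) :=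
    pow_left_monotoneOn.mono fun _ hx => hx.1
  have hintegral : (M : ℝ) ^ (k + 1) / (k + 1) ≤ ∑ i ∈ range M, ((i : ℝ) + 1) ^ k := by
    simpa [integral_pow] using hmono.integral_le_sum
  have hshift : ∑ i ∈ range M, ((i : ℝ) + 1) ^ k + 0 ^ k =
      ∑ i ∈ range M, (i : ℝ) ^ k + (M : ℝ) ^ k := by
    simpa using (sum_range_succ' (fun i : ℕ => (i : ℝ) ^ k) M).symm.trans (sum_range_succ _ M)
  have hzero : (0 : ℝ) ≤ 0 ^ k := pow_nonneg le_rfl k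
  linarith

theorem tendsto_sum_range_pow_div_pow (k : ℕ) :
    Tendsto (fun M : ℕ => (∑ i ∈ range M, (i : ℝ) ^ k) / (M : ℝ) ^ (k + 1)) atTop
      (𝓝 (1 / (k + 1))) := by
  have hlower : Tendsto (fun M : ℕ => 1 / ((k : ℝ) + 1) - 1 / M) atTop (𝓝 (1 / (k + 1))) := by
    simpa using tendsto_one_div_atTop_nhds_zero_nat.const_sub (1 / ((k : ℝ) + 1))
  refine tendsto_of_tendsto_of_tendsto_of_le_of_le' hlower tendsto_const_nhds ?_ ?_
  all_goals
    filter_upwards [eventually_gt_atTop 0] with M hM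
    have hMpos : (0 : ℝ) < (M : ℝ) ^ (k + 1) := by positivity
  · rw [le_div_iff₀ hMpos]
    calc _ = (M : ℝ) ^ (k + 1) / (k + 1) - (M : ℝ) ^ k := by field_simp; ring
      _ ≤ _ := pow_succ_div_sub_pow_le_sum_range_pow k M
  · rw [div_le_iff₀ hMpos]
    calc _ ≤ (M : ℝ) ^ (k + 1) / (k + 1) := sum_range_pow_le_pow_succ_div k M
      _ = _ := by ring

theorem tendsto_double_average_monomial (a b : ℕ) :
    Tendsto (fun p : ℕ × ℕ => 1 / ((p.1 : ℂ) * p.2) *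
        ∑ m ∈ range p.1, ∑ n ∈ range p.2, ((m : ℂ) / p.1) ^ a * ((n : ℂ) / p.2) ^ b)
      (atTop ×ˢ atTop) (𝓝 (1 / ((a + 1) * (b + 1)))) := by
  have hreal := ((tendsto_sum_range_pow_div_pow a).comp tendsto_fst).mul
    ((tendsto_sum_range_pow_div_pow b).comp tendsto_snd)
  convert (continuous_ofReal.tendsto _).comp hreal using 1
  · ext p
    simp only [Function.comp_apply, ofReal_mul, ofReal_div, ofReal_sum, ofReal_pow, ofReal_natCast]
    rw [div_mul_div_comm, sum_mul_sum, sum_div, mul_sum]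
    refine sum_congr rfl fun m _ => ?_
    rw [sum_div, mul_sum]
    exact sum_congr rfl fun n _ => by ring
  · push_cast
    rw [one_div_mul_one_div]

noncomputable def vrowCoeff (β : ℂ) : Fin 4 → ℂ :=
  ![1, I, I * (2 * Real.pi) * β, I * (2 * Real.pi) * β]

def vrowExpM : Fin 4 → ℕ := ![0, 0, 1, 0]

def vrowExpN : Fin 4 → ℕ := ![0, 0, 0, 1]

theorem vrow_eq_monomial (M N : ℕ) (β : ℂ) (m n : ℕ) (s : Fin 4) :
    vrow M N β m n s =
      vrowCoeff β s * ((m : ℂ) / M) ^ vrowExpM s * ((n : ℂ) / N) ^ vrowExpN s := by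
  fin_cases s <;> simp [vrow, vrowCoeff, vrowExpM, vrowExpN] <;> ring

theorem TL_eq (β : ℂ) (s t : Fin 4) :
    TL β s t = conj (vrowCoeff β s) * vrowCoeff β t /
      (((vrowExpM s + vrowExpM t : ℕ) + 1) * ((vrowExpN s + vrowExpN t : ℕ) + 1)) := by
  fin_cases s <;> fin_cases t <;>
    simp [TL, vrowCoeff, vrowExpM, vrowExpN, normSq_eq_conj_mul_self, map_ofNat] <;>
    grind [I_mul_I]

/-- Entrywise, `(1/(MN))·T(M,N,β)` converges, as `M, N → ∞` jointly, to `T_L(β)`. -/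
theorem weighting_matrix_tendsto (β : ℂ) :
    ∀ s t : Fin 4,
      Tendsto
        (fun p : ℕ × ℕ =>
          (1 / ((p.1 : ℂ) * (p.2 : ℂ))) *
            ∑ m ∈ Finset.range p.1, ∑ n ∈ Finset.range p.2,
              (starRingEnd ℂ) (vrow p.1 p.2 β m n s) * vrow p.1 p.2 β m n t)
        (atTop ×ˢ atTop) (nhds (TL β s t)) := by
  intro s t
  have h := (tendsto_double_average_monomial (vrowExpM s + vrowExpM t)
    (vrowExpN s + vrowExpN t)).const_mul (conj (vrowCoeff β s) * vrowCoeff β t)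
  rw [TL_eq, div_eq_mul_one_div]
  refine h.congr fun p => ?_
  simp only [vrow_eq_monomial, mul_sum]
  refine sum_congr rfl fun m _ => sum_congr rfl fun n _ => ?_
  simp only [map_mul, map_pow, map_div₀, map_natCast]
  ring
end

section
/- Let δ₁, δ₂ be nonzero real numbers. Then (1/(M·N)²) · | Σ_{m=1}^{M} Σ_{n=1}^{N} exp( −j·2π·( (m−1)·δ₁/M + (n−1)·δ₂/N ) ) |² converges, as M → ∞ and N → ∞ (jointly along the product of atTop filters on the positive integers), to Sa²(π·δ₁)·Sa²(π·δ₂), where Sa(t) = sin(t)/t. -/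
/-!
The double sum factors into a product of two one-dimensional geometric sums. Multiplying the
geometric sum by `z - 1` shows `‖∑_{m<M} e^{i m θ}‖ · |sin (θ/2)| = |sin (M θ/2)|`, so with
`θ = -2πδ/M` the normalized modulus is `|sin (πδ)| / (M |sin (πδ/M)|)`, and
`M sin (πδ/M) = πδ · sinc (πδ/M) → πδ` by continuity of `sinc` at `0`.
-/

open Finset Filter

/-- The sampling function `Sa(t) = Real.sin t / t`. -/
noncomputable def Sa (t : ℝ) : ℝ := Real.sin t / t

open Topology

theorem norm_sum_range_exp_mul_abs_sin (θ : ℝ) (n : ℕ) :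
    ‖∑ m ∈ range n, Complex.exp (Complex.I * ((m * θ : ℝ) : ℂ))‖ * |Real.sin (θ / 2)| =
      |Real.sin (n * θ / 2)| := by
  set z := Complex.exp (Complex.I * θ)
  have hpow : ∀ k : ℕ, Complex.exp (Complex.I * ((k * θ : ℝ) : ℂ)) = z ^ k := fun k => by
    rw [← Complex.exp_nat_mul]; push_cast; ring_nf
  have hgeom := congrArg norm (geom_sum_mul z n)
  rw [norm_mul, ← hpow, Complex.norm_exp_I_mul_ofReal_sub_one,
    Complex.norm_exp_I_mul_ofReal_sub_one, norm_mul, norm_mul, Real.norm_two,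
    Real.norm_eq_abs, Real.norm_eq_abs] at hgeom
  simp only [hpow]
  linarith

noncomputable def arrayGain (δ : ℝ) (M : ℕ) : ℂ :=
  ∑ m ∈ range M, Complex.exp (-Complex.I * (2 * (Real.pi : ℂ)) * ((m : ℂ) * (δ : ℂ) / (M : ℂ)))

theorem norm_arrayGain_mul_abs_sin (δ : ℝ) {M : ℕ} (hM : M ≠ 0) :
    ‖arrayGain δ M‖ * |Real.sin (Real.pi * δ / M)| = |Real.sin (Real.pi * δ)| := by
  have hM' : (M : ℝ) ≠ 0 := Nat.cast_ne_zero.mpr hM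
  have h := norm_sum_range_exp_mul_abs_sin (-(2 * Real.pi * δ / M)) M
  rw [show (M : ℝ) * -(2 * Real.pi * δ / M) / 2 = -(Real.pi * δ) by field_simp,
    show -(2 * Real.pi * δ / M) / 2 = -(Real.pi * δ / M) by ring, Real.sin_neg, Real.sin_neg,
    abs_neg, abs_neg] at h
  have hsum : arrayGain δ M = ∑ m ∈ range M,
      Complex.exp (Complex.I * ((m * -(2 * Real.pi * δ / M) : ℝ) : ℂ)) :=
    sum_congr rfl fun m _ => by push_cast; ring_nf
  rw [← h, hsum]

theorem tendsto_norm_arrayGain_div {δ : ℝ} (hδ : δ ≠ 0) :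
    Tendsto (fun M : ℕ => ‖arrayGain δ M‖ / M) atTop (𝓝 |Sa (Real.pi * δ)|) := by
  have hπδ : Real.pi * δ ≠ 0 := mul_ne_zero Real.pi_ne_zero hδ
  have hsinc : Tendsto (fun M : ℕ => |Real.sinc (Real.pi * δ / M)|) atTop (𝓝 1) := by
    have harg := tendsto_const_nhds (x := Real.pi * δ).div_atTop
      (tendsto_natCast_atTop_atTop (R := ℝ))
    simpa using ((Real.continuous_sinc.tendsto 0).comp harg).abs
  have hmul : ∀ M : ℕ, M ≠ 0 →
      ‖arrayGain δ M‖ / M * |Real.sinc (Real.pi * δ / M)| = |Sa (Real.pi * δ)| := by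
    intro M hM
    have hM' : (M : ℝ) ≠ 0 := Nat.cast_ne_zero.mpr hM
    rw [Real.sinc_of_ne_zero (div_ne_zero hπδ hM'), Sa, abs_div, abs_div, abs_div,
      ← norm_arrayGain_mul_abs_sin δ hM, Nat.abs_cast]
    field_simp
  have hlim := tendsto_const_nhds (x := |Sa (Real.pi * δ)|).div hsinc one_ne_zero
  rw [div_one] at hlim
  refine hlim.congr' ?_
  filter_upwards [eventually_ne_atTop 0, hsinc.eventually_ne one_ne_zero] with M hM hsM
  exact (eq_div_of_mul_eq hsM (hmul M hM)).symm

theorem sum_range_sum_range_exp_eq_arrayGain_mul (δ₁ δ₂ : ℝ) (M N : ℕ) :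
    ∑ m ∈ range M, ∑ n ∈ range N,
        Complex.exp (-Complex.I * (2 * (Real.pi : ℂ)) *
          ((m : ℂ) * (δ₁ : ℂ) / (M : ℂ) + (n : ℂ) * (δ₂ : ℂ) / (N : ℂ))) =
      arrayGain δ₁ M * arrayGain δ₂ N := by
  rw [arrayGain, arrayGain, sum_mul_sum]
  refine sum_congr rfl fun m _ => sum_congr rfl fun n _ => ?_
  rw [← Complex.exp_add, mul_add]

/-- Limit of the normalized squared beamforming gain: for nonzero `δ₁, δ₂`,
`(1/(MN)²)·|∑_{m=1}^{M} ∑_{n=1}^{N} exp(-j·2π·((m-1)δ₁/M + (n-1)δ₂/N))|²` converges, as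
`M, N → ∞` jointly, to `Sa²(πδ₁)·Sa²(πδ₂)`. -/
theorem normalized_gain_sq_tendsto (δ₁ δ₂ : ℝ) (h1 : δ₁ ≠ 0) (h2 : δ₂ ≠ 0) :
    Tendsto
      (fun p : ℕ × ℕ =>
        (1 / ((p.1 : ℝ) * (p.2 : ℝ)) ^ 2) *
          (‖
            (∑ m ∈ Finset.range p.1, ∑ n ∈ Finset.range p.2,
              Complex.exp (-Complex.I * (2 * (Real.pi : ℂ)) *
                ((m : ℂ) * (δ₁ : ℂ) / (p.1 : ℂ) + (n : ℂ) * (δ₂ : ℂ) / (p.2 : ℂ))))‖) ^ 2)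
      (atTop ×ˢ atTop)
      (nhds (Sa (Real.pi * δ₁) ^ 2 * Sa (Real.pi * δ₂) ^ 2)) := by
  have hfactor : ∀ p : ℕ × ℕ,
      (‖arrayGain δ₁ p.1‖ / p.1) ^ 2 * (‖arrayGain δ₂ p.2‖ / p.2) ^ 2 =
        1 / ((p.1 : ℝ) * p.2) ^ 2 * ‖∑ m ∈ range p.1, ∑ n ∈ range p.2,
          Complex.exp (-Complex.I * (2 * (Real.pi : ℂ)) *
            ((m : ℂ) * (δ₁ : ℂ) / (p.1 : ℂ) + (n : ℂ) * (δ₂ : ℂ) / (p.2 : ℂ)))‖ ^ 2 := by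
    intro p
    rw [sum_range_sum_range_exp_eq_arrayGain_mul, norm_mul]
    ring
  rw [← sq_abs (Sa _), ← sq_abs (Sa (Real.pi * δ₂))]
  exact ((((tendsto_norm_arrayGain_div h1).comp tendsto_fst).pow 2).mul
    (((tendsto_norm_arrayGain_div h2).comp tendsto_snd).pow 2)).congr hfactor
end
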